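/- In the setting of the abstract Balian–Low theorem, if φ_0 ∈ V ∩ D(𝔛) ∩ D(𝔓) generates an orthonormal Gabor frame {T_{m,n}φ_0}, then ⟨𝔛φ_0, 𝔓φ_0⟩ = ⟨𝔓φ_0, 𝔛φ_0⟩, i.e., the inner product ⟨𝔛φ_0, 𝔓φ_0⟩ is real. -/

import Mathlib

open Filter Topology

local notation "⟪" x ", " y "⟫" => @inner ℂ _ _ x y

/-- The Weyl operator `T(z) = e^{i z₁ z₂ /2} e^{i z₁ 𝔛} e^{i z₂ 𝔓}` associated
to the unitary groups `U t = e^{it𝔛}`, `V s = e^{is𝔓}`, for `z ∈ ℝ² ≅ ℂ`. -/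
noncomputable def weylOpR2 {H : Type*} [NormedAddCommGroup H] [NormedSpace ℂ H]
    (U V : ℝ → H →L[ℂ] H) (w : ℝ × ℝ) : H →L[ℂ] H :=
  Complex.exp (Complex.I * w.1 * w.2 / 2) • (U w.1 * V w.2)

/-- The operators `T_{m,n} = T(a)^m T(b)^n` of the generalized Gabor frame
associated to the lattice generated by `a, b ∈ ℝ²` (along a fixed ray the
projective phases cancel, so `T(a)^m = T(m·a)`). -/
noncomputable def gaborOp {H : Type*} [NormedAddCommGroup H] [NormedSpace ℂ H]
    (U V : ℝ → H →L[ℂ] H) (a b : ℝ × ℝ) (m n : ℤ) : H →L[ℂ] H :=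
  weylOpR2 U V ((m : ℝ) • a) * weylOpR2 U V ((n : ℝ) • b)


/-!
Write `ξ = 𝔛φ₀` and `η = 𝔓φ₀`. Both lie in `S`: they are derivatives of orbits of `φ₀`
that stay in the closed invariant subspace `S`. Conjugating by `e^{it𝔛}` multiplies `T_p` by a
phase `e^{itγ_p}` with `γ_0 = 0`, and `T_p φ₀ ⊥ φ₀` for `p ≠ 0`; differentiating at `t = 0`
gives `⟪T_p φ₀, ξ⟫ = ⟪T_p ξ, φ₀⟫ = ω_p ⟪ξ, T_{-p} φ₀⟫` with a unimodular `ω_p` that does not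
depend on `ξ`, and likewise for `η`. Expanding `⟪ξ, η⟫` in the orthonormal basis `(T_p φ₀)` of
`S` and reindexing by `p ↦ -p` turns it into `⟪η, ξ⟫`.
-/

section Parseval

open ComplexConjugate

variable {𝕜 H ι : Type*} [RCLike 𝕜] [NormedAddCommGroup H] [InnerProductSpace 𝕜 H]
  [CompleteSpace H] {S : Submodule 𝕜 H} {e : ι → H}

theorem Orthonormal.tsum_inner_mul_inner_of_complete (he : Orthonormal 𝕜 e)
    (hS : IsClosed (S : Set H)) (heS : ∀ i, e i ∈ S)
    (htot : ∀ ψ ∈ S, (∀ i, inner 𝕜 (e i) ψ = 0) → ψ = 0) {x y : H} (hx : x ∈ S) (hy : y ∈ S) :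
    ∑' i, inner 𝕜 x (e i) * inner 𝕜 (e i) y = inner 𝕜 x y := by
  have : CompleteSpace S := hS.completeSpace_coe
  let v : ι → S := fun i => ⟨e i, heS i⟩
  have hv : Orthonormal 𝕜 v := he.codRestrict S heS
  have hbot : (Submodule.span 𝕜 (Set.range v))ᗮ = ⊥ := by
    refine (Submodule.eq_bot_iff _).2 fun z hz => Subtype.ext <| htot z z.2 fun i => ?_
    exact (Submodule.mem_orthogonal _ _).1 hz _ (Submodule.subset_span ⟨i, rfl⟩)
  simpa only [HilbertBasis.coe_mkOfOrthogonalEqBot, Submodule.coe_inner] using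
    (HilbertBasis.mkOfOrthogonalEqBot hv hbot).tsum_inner_mul_inner ⟨x, hx⟩ ⟨y, hy⟩

theorem Orthonormal.inner_comm_of_coeff_symm (he : Orthonormal 𝕜 e)
    (hS : IsClosed (S : Set H)) (heS : ∀ i, e i ∈ S)
    (htot : ∀ ψ ∈ S, (∀ i, inner 𝕜 (e i) ψ = 0) → ψ = 0) (σ : ι ≃ ι) {ω : ι → 𝕜}
    (hω : ∀ i, ‖ω i‖ = 1) {x y : H} (hx : x ∈ S) (hy : y ∈ S)
    (hxe : ∀ i, inner 𝕜 (e i) x = ω i * inner 𝕜 x (e (σ i)))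
    (hye : ∀ i, inner 𝕜 (e i) y = ω i * inner 𝕜 y (e (σ i))) :
    inner 𝕜 x y = inner 𝕜 y x := by
  rw [← he.tsum_inner_mul_inner_of_complete hS heS htot hx hy,
    ← he.tsum_inner_mul_inner_of_complete hS heS htot hy hx,
    ← σ.tsum_eq fun j => inner 𝕜 y (e j) * inner 𝕜 (e j) x]
  refine tsum_congr fun i => ?_
  have hωi : conj (ω i) * ω i = 1 := by rw [RCLike.conj_mul, hω i]; simp
  calc inner 𝕜 x (e i) * inner 𝕜 (e i) y
      = conj (inner 𝕜 (e i) x) * inner 𝕜 (e i) y := by rw [inner_conj_symm]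
    _ = (conj (ω i) * ω i) * (inner 𝕜 y (e (σ i)) * inner 𝕜 (e (σ i)) x) := by
      rw [hxe, hye, map_mul, inner_conj_symm]; ring
    _ = inner 𝕜 y (e (σ i)) * inner 𝕜 (e (σ i)) x := by rw [hωi, one_mul]

end Parseval

theorem Submodule.mem_of_hasDerivAt {𝕜 F : Type*} [NontriviallyNormedField 𝕜]
    [NormedAddCommGroup F] [NormedSpace 𝕜 F] {S : Submodule 𝕜 F} (hS : IsClosed (S : Set F))
    {f : 𝕜 → F} (hf : ∀ t, f t ∈ S) {f' : F} {t₀ : 𝕜} (h : HasDerivAt f f' t₀) : f' ∈ S := by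
  have hspan : Submodule.span 𝕜 (f '' Set.univ) ≤ S :=
    Submodule.span_le.2 <| by rintro - ⟨t, -, rfl⟩; exact hf t
  rw [← h.deriv]
  exact hS.closure_subset_iff.2 hspan
    (range_deriv_subset_closure_span_image f dense_univ ⟨t₀, rfl⟩)

section Operators

open Complex

variable {H : Type*} [NormedAddCommGroup H] [NormedSpace ℂ H] {U V : ℝ → H →L[ℂ] H}

theorem mem_of_hasDerivAt_orbit {W : ℝ → H →L[ℂ] H} {S : Submodule ℂ H}
    (hS : IsClosed (S : Set H)) (hW : ∀ t, ∀ ψ ∈ S, W t ψ ∈ S) {φ ξ : H} (hφ : φ ∈ S)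
    (hder : HasDerivAt (fun t => W t φ) (I • ξ) 0) : ξ ∈ S :=
  (S.smul_mem_iff I_ne_zero).1 <|
    (S.restrictScalars ℝ).mem_of_hasDerivAt hS (fun t => hW t φ hφ) hder

theorem weylOpR2_apply (w : ℝ × ℝ) (x : H) :
    weylOpR2 U V w x = exp (I * w.1 * w.2 / 2) • U w.1 (V w.2 x) :=
  rfl

theorem weylOpR2_mem {S : Submodule ℂ H}
    (hS : ∀ (s : ℝ) (ψ : H), ψ ∈ S → U s ψ ∈ S ∧ V s ψ ∈ S)
    (w : ℝ × ℝ) {ψ : H} (hψ : ψ ∈ S) : weylOpR2 U V w ψ ∈ S :=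
  S.smul_mem _ (hS _ _ (hS _ _ hψ).2).1

theorem gaborOp_mem {S : Submodule ℂ H}
    (hS : ∀ (s : ℝ) (ψ : H), ψ ∈ S → U s ψ ∈ S ∧ V s ψ ∈ S)
    (a b : ℝ × ℝ) (m n : ℤ) {ψ : H} (hψ : ψ ∈ S) : gaborOp U V a b m n ψ ∈ S :=
  weylOpR2_mem hS _ (weylOpR2_mem hS _ hψ)

noncomputable def gaborSystem (U V : ℝ → H →L[ℂ] H) (a b : ℝ × ℝ) (φ : H) (p : ℤ × ℤ) : H :=
  gaborOp U V a b p.1 p.2 φ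

end Operators

section UnitaryGroup

open Complex

variable {H : Type*} [NormedAddCommGroup H] [InnerProductSpace ℂ H]

structure IsUnitaryGroup (U : ℝ → H →L[ℂ] H) : Prop where
  map_add : ∀ t s, U (t + s) = U t * U s
  map_zero : U 0 = 1
  norm_map : ∀ t x, ‖U t x‖ = ‖x‖

namespace IsUnitaryGroup

variable {U : ℝ → H →L[ℂ] H}

theorem apply_apply (hU : IsUnitaryGroup U) (t s : ℝ) (x : H) : U t (U s x) = U (t + s) x := by
  rw [hU.map_add]; rfl

theorem apply_comm (hU : IsUnitaryGroup U) (t s : ℝ) (x : H) : U t (U s x) = U s (U t x) := by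
  rw [hU.apply_apply, hU.apply_apply, add_comm]

theorem inner_map_left (hU : IsUnitaryGroup U) (t : ℝ) (x y : H) :
    ⟪U t x, y⟫ = ⟪x, U (-t) y⟫ := by
  calc ⟪U t x, y⟫ = ⟪U t x, U t (U (-t) y)⟫ := by
        rw [hU.apply_apply, add_neg_cancel, hU.map_zero]; rfl
    _ = ⟪x, U (-t) y⟫ := (⟨(U t).toLinearMap, hU.norm_map t⟩ : H →ₗᵢ[ℂ] H).inner_map_map x _

/-- Formally `[X, A] = γ A` for the generator `X`, so `⟪Aφ, Xφ⟫ = ⟪XAφ, φ⟫ = ⟪(AX + γA)φ, φ⟫`.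
Rigorously: differentiate `⟪Aφ, U t φ⟫ = e^{iγt} ⟪A (U (-t) φ), φ⟫` at `t = 0`. -/
theorem inner_apply_generator (hU : IsUnitaryGroup U) {φ ξ : H}
    (hder : HasDerivAt (fun t => U t φ) (I • ξ) 0) (A : H →L[ℂ] H) (γ : ℝ)
    (hA : ∀ t x, U t (A x) = exp (I * t * γ) • A (U t x)) :
    ⟪A φ, ξ⟫ = γ * ⟪A φ, φ⟫ + ⟪A ξ, φ⟫ := by
  have hconj : ∀ t : ℝ, ⟪A φ, U t φ⟫ = exp (I * t * γ) * ⟪A (U (-t) φ), φ⟫ := by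
    intro t
    rw [← neg_neg t, ← hU.inner_map_left, hA, inner_smul_left, ← exp_conj, neg_neg]
    congr 2
    simp only [map_mul, conj_I, conj_ofReal]
    push_cast
    ring
  have hlhs : HasDerivAt (fun t : ℝ => ⟪A φ, U t φ⟫) (I * ⟪A φ, ξ⟫) 0 := by
    simpa [inner_smul_right] using (hasDerivAt_const (0 : ℝ) (A φ)).inner ℂ hder
  have hexp : HasDerivAt (fun t : ℝ => exp (I * t * γ)) (I * γ) 0 := by
    simpa using (((ofRealCLM.hasDerivAt (x := (0 : ℝ))).const_mul I).mul_const (γ : ℂ)).cexp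
  have hback : HasDerivAt (fun t : ℝ => A (U (-t) φ)) (A (-(I • ξ))) 0 := by
    have hneg : HasDerivAt (fun t => U (-t) φ) (-(I • ξ)) 0 := by
      simpa [Function.comp_def] using hder.scomp_of_eq (0 : ℝ) (hasDerivAt_neg 0) neg_zero.symm
    exact (A.restrictScalars ℝ).hasFDerivAt.comp_hasDerivAt 0 hneg
  have hrhs : HasDerivAt (fun t : ℝ => exp (I * t * γ) * ⟪A (U (-t) φ), φ⟫)
      (I * γ * ⟪A φ, φ⟫ + I * ⟪A ξ, φ⟫) 0 := by
    simpa [hU.map_zero, inner_smul_left, Pi.mul_def] using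
      hexp.mul (hback.inner ℂ (hasDerivAt_const 0 φ))
  have hderiv_eq := (hlhs.congr_of_eventuallyEq (.of_forall fun t => (hconj t).symm)).unique hrhs
  exact mul_left_cancel₀ I_ne_zero (by linear_combination hderiv_eq)

end IsUnitaryGroup

end UnitaryGroup

section Weyl

open Complex

variable {H : Type*} [NormedAddCommGroup H] [InnerProductSpace ℂ H] {U V : ℝ → H →L[ℂ] H}

structure IsWeylPair (U V : ℝ → H →L[ℂ] H) : Prop where
  left : IsUnitaryGroup U
  right : IsUnitaryGroup V
  comm : ∀ t s : ℝ, U t * V s = exp (-(I * t * s)) • (V s * U t)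

namespace IsWeylPair

theorem apply_swap (h : IsWeylPair U V) (t s : ℝ) (x : H) :
    V s (U t x) = exp (I * t * s) • U t (V s x) := by
  rw [← mul_apply_eq_comp, ← mul_apply_eq_comp, h.comm,
    smul_apply, smul_smul, ← exp_add, add_neg_cancel, exp_zero, one_smul]

theorem left_apply_weylOpR2 (h : IsWeylPair U V) (t : ℝ) (w : ℝ × ℝ) (x : H) :
    U t (weylOpR2 U V w x) = exp (-(I * t * w.2)) • weylOpR2 U V w (U t x) := by
  have hUV : U t (V w.2 x) = exp (-(I * t * w.2)) • V w.2 (U t x) := by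
    rw [← mul_apply_eq_comp, h.comm]; rfl
  rw [weylOpR2_apply, weylOpR2_apply, map_smul, h.left.apply_comm, hUV, map_smul, smul_comm]

theorem right_apply_weylOpR2 (h : IsWeylPair U V) (s : ℝ) (w : ℝ × ℝ) (x : H) :
    V s (weylOpR2 U V w x) = exp (I * s * w.1) • weylOpR2 U V w (V s x) := by
  rw [weylOpR2_apply, weylOpR2_apply, map_smul, h.apply_swap, h.right.apply_comm, smul_comm]
  congr 2
  ring

theorem weylOpR2_apply_weylOpR2 (h : IsWeylPair U V) (w w' : ℝ × ℝ) (x : H) :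
    weylOpR2 U V w (weylOpR2 U V w' x) =
      exp (I * (w'.1 * w.2 - w.1 * w'.2) / 2) • weylOpR2 U V (w + w') x := by
  simp only [weylOpR2_apply, map_smul, h.apply_swap, h.left.apply_apply, h.right.apply_apply,
    smul_smul, ← exp_add, Prod.fst_add, Prod.snd_add]
  congr 2
  push_cast
  ring

theorem inner_weylOpR2_left (h : IsWeylPair U V) (w : ℝ × ℝ) (x y : H) :
    ⟪weylOpR2 U V w x, y⟫ = ⟪x, weylOpR2 U V (-w) y⟫ := by
  rw [weylOpR2_apply, weylOpR2_apply, inner_smul_left, inner_smul_right, h.left.inner_map_left,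
    h.right.inner_map_left, h.apply_swap, inner_smul_right, ← mul_assoc, ← exp_conj, ← exp_add]
  congr 2
  simp only [map_div₀, map_mul, conj_I, conj_ofReal, map_ofNat, Prod.fst_neg, Prod.snd_neg]
  push_cast
  ring

theorem gaborOp_zero_zero (h : IsWeylPair U V) (a b : ℝ × ℝ) : gaborOp U V a b 0 0 = 1 := by
  ext x
  simp [gaborOp, weylOpR2, h.left.map_zero, h.right.map_zero]

theorem left_apply_gaborOp (h : IsWeylPair U V) (a b : ℝ × ℝ) (m n : ℤ) (t : ℝ) (x : H) :
    U t (gaborOp U V a b m n x) =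
      exp (I * t * ↑(-(m * a.2 + n * b.2))) • gaborOp U V a b m n (U t x) := by
  simp only [gaborOp, mul_apply_eq_comp, h.left_apply_weylOpR2, map_smul, smul_smul,
    ← exp_add, Prod.smul_snd, smul_eq_mul]
  congr 2
  push_cast
  ring

theorem right_apply_gaborOp (h : IsWeylPair U V) (a b : ℝ × ℝ) (m n : ℤ) (s : ℝ) (x : H) :
    V s (gaborOp U V a b m n x) =
      exp (I * s * ↑(m * a.1 + n * b.1)) • gaborOp U V a b m n (V s x) := by
  simp only [gaborOp, mul_apply_eq_comp, h.right_apply_weylOpR2, map_smul, smul_smul,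
    ← exp_add, Prod.smul_fst, smul_eq_mul]
  congr 2
  push_cast
  ring

/-- `T_{m,n}* = T(-nb) T(-ma)` and `T_{-m,-n} = T(-ma) T(-nb)` are both multiples of `T(-ma-nb)`,
and they differ by the symplectic phase below. -/
theorem inner_gaborOp_left (h : IsWeylPair U V) (a b : ℝ × ℝ) (m n : ℤ) (x y : H) :
    ⟪gaborOp U V a b m n x, y⟫ =
      exp (↑(m * n * (a.1 * b.2 - b.1 * a.2)) * I) * ⟪x, gaborOp U V a b (-m) (-n) y⟫ := by
  simp only [gaborOp, mul_apply_eq_comp]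
  rw [h.inner_weylOpR2_left, h.inner_weylOpR2_left, h.weylOpR2_apply_weylOpR2,
    h.weylOpR2_apply_weylOpR2, inner_smul_right, inner_smul_right, ← mul_assoc, ← exp_add,
    Int.cast_neg, Int.cast_neg, neg_smul, neg_smul, add_comm (-((n : ℝ) • b))]
  congr 2
  simp only [Prod.smul_fst, Prod.smul_snd, Prod.fst_neg, Prod.snd_neg, smul_eq_mul]
  push_cast
  ring

theorem gaborSystem_zero (h : IsWeylPair U V) (a b : ℝ × ℝ) (φ : H) :
    gaborSystem U V a b φ 0 = φ := by
  rw [gaborSystem, Prod.fst_zero, Prod.snd_zero, h.gaborOp_zero_zero, one_apply_eq_self]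

theorem inner_gaborSystem_generator {W : ℝ → H →L[ℂ] H} (h : IsWeylPair U V)
    (hW : IsUnitaryGroup W) {a b : ℝ × ℝ} (γ : ℤ × ℤ → ℝ) (hγ : γ 0 = 0)
    (hWT : ∀ (p : ℤ × ℤ) (t : ℝ) (x : H),
      W t (gaborOp U V a b p.1 p.2 x) = exp (I * t * γ p) • gaborOp U V a b p.1 p.2 (W t x))
    {φ ξ : H} (he : Orthonormal ℂ (gaborSystem U V a b φ))
    (hder : HasDerivAt (fun t => W t φ) (I • ξ) 0) (p : ℤ × ℤ) :
    ⟪gaborSystem U V a b φ p, ξ⟫ =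
      exp (↑(p.1 * p.2 * (a.1 * b.2 - b.1 * a.2)) * I) * ⟪ξ, gaborSystem U V a b φ (-p)⟫ := by
  have hdiag : (γ p : ℂ) * ⟪gaborSystem U V a b φ p, φ⟫ = 0 := by
    rcases eq_or_ne p 0 with rfl | hp
    · simp [hγ]
    · have hperp := he.inner_eq_zero hp
      rw [h.gaborSystem_zero] at hperp
      rw [hperp, mul_zero]
  calc ⟪gaborSystem U V a b φ p, ξ⟫
      = γ p * ⟪gaborSystem U V a b φ p, φ⟫ + ⟪gaborOp U V a b p.1 p.2 ξ, φ⟫ :=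
        hW.inner_apply_generator hder _ _ (hWT p)
    _ = ⟪gaborOp U V a b p.1 p.2 ξ, φ⟫ := by rw [hdiag, zero_add]
    _ = _ := h.inner_gaborOp_left a b _ _ ξ φ

end IsWeylPair

end Weyl

theorem gabor_generator_inner_product_real_general
    {H : Type*} [NormedAddCommGroup H] [InnerProductSpace ℂ H] [CompleteSpace H]
    (X P : H →ₗ.[ℂ] H)
    (U V : ℝ → H →L[ℂ] H)
    (hUgrp : ∀ t s : ℝ, U (t + s) = U t * U s)
    (hVgrp : ∀ t s : ℝ, V (t + s) = V t * V s)
    (hU0 : U 0 = 1) (hV0 : V 0 = 1)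
    (hUnitU : ∀ (t : ℝ) (x : H), ‖U t x‖ = ‖x‖)
    (hUnitV : ∀ (s : ℝ) (x : H), ‖V s x‖ = ‖x‖)
    (hUgen : ∀ (ψ : X.domain) (t : ℝ),
      HasDerivAt (fun s : ℝ => U s (ψ : H)) (U t (Complex.I • X ψ)) t)
    (hVgen : ∀ (ψ : P.domain) (t : ℝ),
      HasDerivAt (fun s : ℝ => V s (ψ : H)) (V t (Complex.I • P ψ)) t)
    (hWeyl : ∀ t s : ℝ, U t * V s = Complex.exp (-(Complex.I * t * s)) • (V s * U t))
    -- the lattice `Γ` is generated by linearly independent `a, b ∈ ℝ²`: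
    (a b : ℝ × ℝ)
    -- `S` is a closed subspace invariant under the unitary groups:
    (S : Submodule ℂ H) (hSclosed : IsClosed (S : Set H))
    (hSinv : ∀ (s : ℝ) (ψ : H), ψ ∈ S → U s ψ ∈ S ∧ V s ψ ∈ S)
    -- `{T_{m,n} φ₀}` is a complete orthonormal system for `S`:
    (φ₀ : H) (hφ₀S : φ₀ ∈ S)
    (horth : ∀ m n m' n' : ℤ,
      ⟪gaborOp U V a b m n φ₀, gaborOp U V a b m' n' φ₀⟫ =
        if m = m' ∧ n = n' then (1 : ℂ) else 0)
    (hcomplete : ∀ ψ ∈ S, (∀ m n : ℤ, ⟪gaborOp U V a b m n φ₀, ψ⟫ = 0) → ψ = 0)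
    -- `φ₀` belongs to both domains:
    (hx : φ₀ ∈ X.domain) (hp : φ₀ ∈ P.domain) :
    ⟪X ⟨φ₀, hx⟩, P ⟨φ₀, hp⟩⟫ = ⟪P ⟨φ₀, hp⟩, X ⟨φ₀, hx⟩⟫ := by
  have h : IsWeylPair U V := ⟨⟨hUgrp, hU0, hUnitU⟩, ⟨hVgrp, hV0, hUnitV⟩, hWeyl⟩
  have hderX : HasDerivAt (fun t => U t φ₀) (Complex.I • X ⟨φ₀, hx⟩) 0 := by
    simpa [hU0] using hUgen ⟨φ₀, hx⟩ 0
  have hderP : HasDerivAt (fun t => V t φ₀) (Complex.I • P ⟨φ₀, hp⟩) 0 := by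
    simpa [hV0] using hVgen ⟨φ₀, hp⟩ 0
  have he : Orthonormal ℂ (gaborSystem U V a b φ₀) :=
    orthonormal_iff_ite.2 fun p q => by
      simpa [gaborSystem, Prod.ext_iff] using horth p.1 p.2 q.1 q.2
  refine he.inner_comm_of_coeff_symm hSclosed (fun p => gaborOp_mem hSinv a b _ _ hφ₀S)
    (fun ψ hψ h0 => hcomplete ψ hψ fun m n => h0 (m, n)) (Equiv.neg _)
    (fun _ => Complex.norm_exp_ofReal_mul_I _)
    (mem_of_hasDerivAt_orbit hSclosed (fun t ψ hψ => (hSinv t ψ hψ).1) hφ₀S hderX)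
    (mem_of_hasDerivAt_orbit hSclosed (fun t ψ hψ => (hSinv t ψ hψ).2) hφ₀S hderP)
    (h.inner_gaborSystem_generator h.left _ (by simp) (fun p => h.left_apply_gaborOp a b p.1 p.2)
      he hderX)
    (h.inner_gaborSystem_generator h.right _ (by simp) (fun p => h.right_apply_gaborOp a b p.1 p.2)
      he hderP)

/-- in the setting of the abstract Balian–Low theorem, if
`φ₀ ∈ V ∩ D(𝔛) ∩ D(𝔓)` generates an orthonormal Gabor frame `{T_{m,n} φ₀}`
for the closed invariant subspace `S`, then
`⟪𝔛φ₀, 𝔓φ₀⟫ = ⟪𝔓φ₀, 𝔛φ₀⟫`, i.e. the inner product `⟪𝔛φ₀, 𝔓φ₀⟫` is real. -/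
theorem gabor_generator_inner_product_real
    {H : Type*} [NormedAddCommGroup H] [InnerProductSpace ℂ H] [CompleteSpace H]
    (X P : H →ₗ.[ℂ] H) (hXsa : IsSelfAdjoint X) (hPsa : IsSelfAdjoint P)
    (U V : ℝ → H →L[ℂ] H)
    (hUgrp : ∀ t s : ℝ, U (t + s) = U t * U s)
    (hVgrp : ∀ t s : ℝ, V (t + s) = V t * V s)
    (hU0 : U 0 = 1) (hV0 : V 0 = 1)
    (hUnitU : ∀ (t : ℝ) (x : H), ‖U t x‖ = ‖x‖)
    (hUnitV : ∀ (s : ℝ) (x : H), ‖V s x‖ = ‖x‖)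
    (hUgen : ∀ (ψ : X.domain) (t : ℝ),
      HasDerivAt (fun s : ℝ => U s (ψ : H)) (U t (Complex.I • X ψ)) t)
    (hVgen : ∀ (ψ : P.domain) (t : ℝ),
      HasDerivAt (fun s : ℝ => V s (ψ : H)) (V t (Complex.I • P ψ)) t)
    (hWeyl : ∀ t s : ℝ, U t * V s = Complex.exp (-(Complex.I * t * s)) • (V s * U t))
    (C : Submodule ℂ H) (hCX : C ≤ X.domain) (hCP : C ≤ P.domain)
    (hcore : ∀ (ψ : H) (hx : ψ ∈ X.domain) (hp : ψ ∈ P.domain),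
      ∃ ξ : ℕ → C,
        Tendsto (fun i => (ξ i : H)) atTop (𝓝 ψ) ∧
        Tendsto (fun i => X ⟨(ξ i : H), hCX (ξ i).2⟩) atTop (𝓝 (X ⟨ψ, hx⟩)) ∧
        Tendsto (fun i => P ⟨(ξ i : H), hCP (ξ i).2⟩) atTop (𝓝 (P ⟨ψ, hp⟩)))
    -- the lattice `Γ` is generated by linearly independent `a, b ∈ ℝ²`:
    (a b : ℝ × ℝ) (hab : LinearIndependent ℝ ![a, b])
    -- `S` is a closed subspace invariant under the unitary groups:
    (S : Submodule ℂ H) (hSclosed : IsClosed (S : Set H))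
    (hSinv : ∀ (s : ℝ) (ψ : H), ψ ∈ S → U s ψ ∈ S ∧ V s ψ ∈ S)
    -- `{T_{m,n} φ₀}` is a complete orthonormal system for `S`:
    (φ₀ : H) (hφ₀S : φ₀ ∈ S)
    (horth : ∀ m n m' n' : ℤ,
      ⟪gaborOp U V a b m n φ₀, gaborOp U V a b m' n' φ₀⟫ =
        if m = m' ∧ n = n' then (1 : ℂ) else 0)
    (hcomplete : ∀ ψ ∈ S, (∀ m n : ℤ, ⟪gaborOp U V a b m n φ₀, ψ⟫ = 0) → ψ = 0)
    -- `φ₀` belongs to both domains: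
    (hx : φ₀ ∈ X.domain) (hp : φ₀ ∈ P.domain) :
    ⟪X ⟨φ₀, hx⟩, P ⟨φ₀, hp⟩⟫ = ⟪P ⟨φ₀, hp⟩, X ⟨φ₀, hx⟩⟫ :=
  gabor_generator_inner_product_real_general X P U V hUgrp hVgrp hU0 hV0 hUnitU hUnitV hUgen hVgen
    hWeyl a b S hSclosed hSinv φ₀ hφ₀S horth hcomplete hx hp
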